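/- arXiv:1709.08180 — 7 statements merged into one kernel-verified Lean document; each statement's English description precedes it below -/
import Mathlib

section
/- Let R be a commutative ring, S ⊆ R a submonoid, A an m × n matrix over R, and L an o × m matrix over R whose rows generate the row syzygies of A (i.e., L·A = 0 and every row vector T with T·A = 0 is an R-linear combination of the rows of L). Then the image of L in the localization S⁻¹R generates the row syzygies of the image of A: for every row vector T' over S⁻¹R with T'·A = 0 there is a row vector U over S⁻¹R with U·L = T'. -/
/-!
Clear denominators: a syzygy `T'` of `A` over `S⁻¹R` becomes, after multiplying by some `b ∈ S`,
the image of a row vector `T` over `R` with `T A` killed by the localization, hence by some `c ∈ S`.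
Then `c T` is a syzygy over `R`, so `c T = U L`, and `(c b)⁻¹ U` works over `S⁻¹R`.
-/

open Matrix

section
variable {R Rₛ : Type*} [CommRing R] [CommRing Rₛ] [Algebra R Rₛ]

section
variable (S : Submonoid R) [IsLocalization S Rₛ] {ι : Type*} [Finite ι]

-- Both lemmas hold because `ι → Rₛ` is the localization at `S` of the `R`-module `ι → R`.
theorem IsLocalization.exists_smul_eq_zero_of_map_comp_eq_zero {v : ι → R}
    (hv : algebraMap R Rₛ ∘ v = 0) : ∃ s : S, s • v = 0 :=
  (IsLocalizedModule.eq_zero_iff S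
    (LinearMap.pi fun i : ι => Algebra.linearMap R Rₛ ∘ₗ LinearMap.proj i)).mp hv

theorem IsLocalization.exists_smul_eq_map_comp (v : ι → Rₛ) :
    ∃ (s : S) (w : ι → R), s • v = algebraMap R Rₛ ∘ w := by
  obtain ⟨⟨w, s⟩, h⟩ := IsLocalizedModule.surj S
    (LinearMap.pi fun i : ι => Algebra.linearMap R Rₛ ∘ₗ LinearMap.proj i) v
  exact ⟨s, w, h⟩

end

theorem Matrix.map_comp_vecMul {m n : Type*} [Fintype m] (A : Matrix m n R) (v : m → R) :
    algebraMap R Rₛ ∘ (v ᵥ* A) = (algebraMap R Rₛ ∘ v) ᵥ* A.map (algebraMap R Rₛ) :=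
  funext (RingHom.map_vecMul _ A v)

theorem Matrix.exists_vecMul_map_eq_of_vecMul_map_eq_zero {m n o : Type*} [Fintype m] [Finite n]
    [Fintype o] (S : Submonoid R) [IsLocalization S Rₛ] {A : Matrix m n R} {L : Matrix o m R}
    (hgen : ∀ T : m → R, T ᵥ* A = 0 → ∃ U : o → R, U ᵥ* L = T)
    {T' : m → Rₛ} (hT' : T' ᵥ* A.map (algebraMap R Rₛ) = 0) :
    ∃ U' : o → Rₛ, U' ᵥ* L.map (algebraMap R Rₛ) = T' := by
  obtain ⟨b, T, hT⟩ := IsLocalization.exists_smul_eq_map_comp S T'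
  have hTA : algebraMap R Rₛ ∘ (T ᵥ* A) = 0 := by
    rw [map_comp_vecMul, ← hT, smul_vecMul, hT', smul_zero]
  obtain ⟨c, hc⟩ := IsLocalization.exists_smul_eq_zero_of_map_comp_eq_zero S hTA
  obtain ⟨U, hU⟩ := hgen (c • T) (by rw [smul_vecMul, hc])
  refine ⟨IsLocalization.mk' Rₛ (1 : R) (c * b) • (algebraMap R Rₛ ∘ U), ?_⟩
  rw [smul_vecMul, ← map_comp_vecMul, hU]
  ext i
  have hTi := congrFun hT i
  simp only [Pi.smul_apply, Function.comp_apply, Submonoid.smul_def, smul_eq_mul] at hTi ⊢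
  rw [Algebra.smul_def] at hTi
  have hinv := IsLocalization.mk'_spec Rₛ (1 : R) (c * b)
  rw [Submonoid.coe_mul, map_mul, map_one] at hinv
  rw [map_mul, ← hTi]
  linear_combination T' i * hinv
end

theorem stmt_0_general {R : Type*} [CommRing R] (S : Submonoid R)
    {m n o : ℕ} (A : Matrix (Fin m) (Fin n) R) (L : Matrix (Fin o) (Fin m) R)
    (hgen : ∀ T : Fin m → R, T ᵥ* A = 0 → ∃ U : Fin o → R, U ᵥ* L = T) :
    ∀ T' : Fin m → Localization S,
      T' ᵥ* A.map (algebraMap R (Localization S)) = 0 →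
      ∃ U' : Fin o → Localization S,
        U' ᵥ* L.map (algebraMap R (Localization S)) = T' :=
  fun _ hT' => exists_vecMul_map_eq_of_vecMul_map_eq_zero S hgen hT'

theorem stmt_0 {R : Type*} [CommRing R] (S : Submonoid R)
    {m n o : ℕ} (A : Matrix (Fin m) (Fin n) R) (L : Matrix (Fin o) (Fin m) R)
    (hLA : L * A = 0)
    (hgen : ∀ T : Fin m → R, T ᵥ* A = 0 → ∃ U : Fin o → R, U ᵥ* L = T) :
    ∀ T' : Fin m → Localization S,
      T' ᵥ* A.map (algebraMap R (Localization S)) = 0 →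
      ∃ U' : Fin o → Localization S,
        U' ᵥ* L.map (algebraMap R (Localization S)) = T' :=
  stmt_0_general S A L hgen
end

section
/- Let R be a commutative ring, A an m × n matrix over R, b a row vector of length n, L an o × m matrix of row syzygies of A, and S ⊆ R a submonoid. If T' is a row vector over S⁻¹R with T'·(A/1) = 0 and T' = T/d with T a row vector of length m over R and d ∈ S, then there exist s ∈ S and U over R with U·L = s·T, and then (U/(d·s)) · (L/1) = T/d in S⁻¹R. -/
open Matrix

theorem stmt_1 {R : Type*} [CommRing R] (S : Submonoid R)
    {m n o : ℕ} (A : Matrix (Fin m) (Fin n) R) (L : Matrix (Fin o) (Fin m) R)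
    (hLA : L * A = 0)
    (hgen : ∀ T : Fin m → R, T ᵥ* A = 0 → ∃ U : Fin o → R, U ᵥ* L = T)
    (T : Fin m → R) (d : S)
    (hT : (fun i => Localization.mk (T i) d) ᵥ*
        A.map (algebraMap R (Localization S)) = 0) :
    ∃ s : S, ∃ U : Fin o → R,
      U ᵥ* L = (s : R) • T ∧
      (fun i => Localization.mk (U i) (d * s)) ᵥ*
          L.map (algebraMap R (Localization S)) =
        fun i => Localization.mk (T i) d := by
  -- Step 1: each entry of T ᵥ* A maps to zero in the localization
  have key : ∀ j, algebraMap R (Localization S) ((T ᵥ* A) j) = 0 := by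
    intro j
    have h := congrFun hT j
    simp only [vecMul, dotProduct, Matrix.map_apply, Pi.zero_apply] at h
    have hmk : ∀ i, Localization.mk (T i) d * algebraMap R (Localization S) (A i j)
        = algebraMap R (Localization S) (T i * A i j) * Localization.mk 1 d := by
      intro i
      rw [← Localization.mk_one_eq_algebraMap, ← Localization.mk_one_eq_algebraMap,
        Localization.mk_mul, Localization.mk_mul, mul_one, one_mul]
      rw [mul_one]
    rw [Finset.sum_congr rfl (fun i _ => hmk i), ← Finset.sum_mul, ← map_sum] at h
    have h2 : algebraMap R (Localization S) (∑ i, T i * A i j) *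
        (Localization.mk 1 d * Localization.mk (d : R) 1) = 0 := by
      rw [← mul_assoc, h, zero_mul]
    rw [Localization.mk_mul, one_mul, mul_one, Localization.mk_self, mul_one] at h2
    simpa [vecMul, dotProduct] using h2
  choose c hc using fun j => (IsLocalization.map_eq_zero_iff S (Localization S) _).mp (key j)
  set s : S := ∏ j, c j with hs
  have hsT : ((s : R) • T) ᵥ* A = 0 := by
    funext j
    have : (s : R) • (T ᵥ* A) = ((s : R) • T) ᵥ* A := by
      rw [Matrix.smul_vecMul]
    rw [← this]
    have hdvd : (c j : R) ∣ (s : R) := by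
      have hsc : (s : R) = ∏ i, (c i : R) := by simp [hs]
      rw [hsc]
      exact Finset.dvd_prod_of_mem _ (Finset.mem_univ j)
    obtain ⟨r, hr⟩ := hdvd
    simp only [Pi.smul_apply, smul_eq_mul, Pi.zero_apply, hr]
    rw [mul_comm (c j : R) r, mul_assoc, hc j, mul_zero]
  obtain ⟨U, hU⟩ := hgen _ hsT
  refine ⟨s, U, hU, ?_⟩
  funext k
  simp only [vecMul, dotProduct, Matrix.map_apply]
  have hmk : ∀ i, Localization.mk (U i) (d * s) * algebraMap R (Localization S) (L i k)
      = algebraMap R (Localization S) (U i * L i k) * Localization.mk 1 (d * s) := by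
    intro i
    rw [← Localization.mk_one_eq_algebraMap, ← Localization.mk_one_eq_algebraMap,
      Localization.mk_mul, Localization.mk_mul, mul_one, one_mul]
    rw [mul_one]
  rw [Finset.sum_congr rfl (fun i _ => hmk i), ← Finset.sum_mul, ← map_sum]
  have hUk : ∑ i, U i * L i k = (s : R) * T k := by
    have := congrFun hU k
    simpa [vecMul, dotProduct] using this
  rw [hUk, ← Localization.mk_one_eq_algebraMap, Localization.mk_mul, mul_one, one_mul]
  rw [Localization.mk_eq_mk_iff, Localization.r_iff_exists]
  exact ⟨1, by push_cast; ring⟩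
end

section
/- Let R be a commutative ring, S ⊆ R a submonoid, A an m × n matrix over R, and b a row vector of length n. There exists a row vector y over S⁻¹R with y·(A/1) = b/1 if and only if the intersection dom_R([b]_A) ∩ S is nonempty, where dom_R([b]_A) = { r ∈ R | ∃ x ∈ R^{1×m}, x·A = r·b }. -/
open Matrix

theorem stmt_5 {R : Type*} [CommRing R] (S : Submonoid R) {m n : ℕ}
    (A : Matrix (Fin m) (Fin n) R) (b : Fin n → R) :
    (∃ y : Fin m → Localization S,
        y ᵥ* A.map (algebraMap R (Localization S)) =
          fun j => algebraMap R (Localization S) (b j)) ↔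
      ({r : R | ∃ x : Fin m → R, x ᵥ* A = r • b} ∩ (S : Set R)).Nonempty := by
  classical
  set f := algebraMap R (Localization S) with hf
  constructor
  · rintro ⟨y, hy⟩
    obtain ⟨s, hs⟩ := IsLocalization.exist_integer_multiples_of_finset S
      (Finset.univ.image y)
    choose a ha using fun i : Fin m => hs (y i) (Finset.mem_image_of_mem y (Finset.mem_univ i))
    -- for each j : f (∑ i, a i * A i j) = f (s * b j)
    have key : ∀ j, ∃ c : S, (c : R) * (∑ i, a i * A i j) = c * ((s : R) * b j) := by
      intro j
      rw [← IsLocalization.eq_iff_exists S (Localization S)]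
      have h1 : f (∑ i, a i * A i j) = (s : R) • ∑ i, y i * f (A i j) := by
        rw [map_sum, Finset.smul_sum]
        refine Finset.sum_congr rfl fun i _ => ?_
        rw [_root_.map_mul, ha i, smul_mul_assoc]
      have h2 : ∑ i, y i * f (A i j) = f (b j) := by
        have := congrFun hy j
        simpa [vecMul, dotProduct, Matrix.map_apply] using this
      rw [h1, h2, _root_.map_mul, Algebra.smul_def]
    choose c hc using key
    set C : S := ∏ j, c j with hC
    refine ⟨(C : R) * (s : R), ⟨fun i => (C : R) * a i, ?_⟩, mul_mem C.2 s.2⟩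
    funext j
    have hdvd : (c j : R) ∣ (C : R) := by
      rw [hC]
      push_cast
      exact Finset.dvd_prod_of_mem (fun j => ((c j : R))) (Finset.mem_univ j)
    obtain ⟨d, hd⟩ := hdvd
    have : (C : R) * (∑ i, a i * A i j) = C * ((s : R) * b j) := by
      linear_combination d * hc j + ((∑ i, a i * A i j) - (s : R) * b j) * hd
    simp only [vecMul, dotProduct, Pi.smul_apply, smul_eq_mul]
    calc ∑ i, (C : R) * a i * A i j = (C : R) * ∑ i, a i * A i j := by
          rw [Finset.mul_sum]; exact Finset.sum_congr rfl fun i _ => by ring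
      _ = (C : R) * ((s : R) * b j) := this
      _ = (C : R) * (s : R) * b j := by ring
  · rintro ⟨r, ⟨x, hx⟩, hr⟩
    refine ⟨fun i => IsLocalization.mk' (Localization S) 1 ⟨r, hr⟩ * f (x i), ?_⟩
    funext j
    have hinv : IsLocalization.mk' (Localization S) (1 : R) ⟨r, hr⟩ * f r = 1 := by
      have h := IsLocalization.mk'_spec (Localization S) (1 : R) ⟨r, hr⟩
      rw [_root_.map_one] at h
      exact h
    have hxj : ∑ i, x i * A i j = r * b j := by
      have := congrFun hx j
      simpa [vecMul, dotProduct] using this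
    simp only [vecMul, dotProduct, Matrix.map_apply]
    calc ∑ i, IsLocalization.mk' (Localization S) 1 ⟨r, hr⟩ * f (x i) * f (A i j)
        = IsLocalization.mk' (Localization S) 1 ⟨r, hr⟩ * f (∑ i, x i * A i j) := by
          rw [map_sum, Finset.mul_sum]
          exact Finset.sum_congr rfl fun i _ => by rw [_root_.map_mul]; ring
      _ = IsLocalization.mk' (Localization S) 1 ⟨r, hr⟩ * (f r * f (b j)) := by
          rw [hxj, _root_.map_mul]
      _ = f (b j) := by rw [← mul_assoc, hinv, one_mul]
end

section
/- Let R be a commutative ring, A ∈ R^{m×n}, b ∈ R^{1×n}, and let L ∈ R^{o×(m+1)} be a matrix whose rows generate all row syzygies of the (m+1) × n matrix obtained by stacking b on top of A. Write the i-th row of L as (rᵢ | Lᵢ) with rᵢ ∈ R and Lᵢ ∈ R^{1×m}. Then dom_R([b]_A) = { r | ∃ x, x·A = r·b } is the ideal generated by r₁, …, r_o. -/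
/-!
A row vector `x` with `x A = r b` is the same thing as the syzygy `(r | -x)` of the stacked
matrix, so `dom_R([b]_A)` is the set of first coordinates of syzygies. Since the syzygies are
exactly the combinations `U L`, their first coordinates are the combinations `∑ Uᵢ rᵢ`, i.e. the
ideal spanned by the `rᵢ`.
-/

open Matrix

namespace Matrix

variable {R : Type*} [CommRing R] {m n : ℕ}

theorem exists_vecMul_eq_smul_iff_exists_syzygy (A : Matrix (Fin m) (Fin n) R) (b : Fin n → R)
    (r : R) :
    (∃ x : Fin m → R, x ᵥ* A = r • b) ↔
      ∃ T : Fin (m + 1) → R, T ᵥ* of (Fin.cases b A) = 0 ∧ T 0 = r := by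
  have hsyz : ∀ T : Fin (m + 1) → R,
      T ᵥ* of (Fin.cases b A) = T 0 • b + Fin.tail T ᵥ* A := fun T => vecMul_cons T b A
  constructor
  · rintro ⟨x, hx⟩
    refine ⟨Fin.cons r (-x), ?_, rfl⟩
    rw [hsyz, Fin.cons_zero, Fin.tail_cons, neg_vecMul, hx, add_neg_cancel]
  · rintro ⟨T, hT, rfl⟩
    refine ⟨-Fin.tail T, ?_⟩
    rw [neg_vecMul, neg_eq_iff_eq_neg, ← sub_eq_zero, sub_neg_eq_add, add_comm, ← hsyz, hT]

end Matrix

theorem stmt_7 {R : Type*} [CommRing R] {m n o : ℕ}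
    (A : Matrix (Fin m) (Fin n) R) (b : Fin n → R)
    (L : Matrix (Fin o) (Fin (m + 1)) R)
    (stack : Matrix (Fin (m + 1)) (Fin n) R)
    (hstack : stack = Matrix.of (Fin.cases b A))
    (hLstack : L * stack = 0)
    (hgen : ∀ T : Fin (m + 1) → R, T ᵥ* stack = 0 →
      ∃ U : Fin o → R, U ᵥ* L = T) :
    {r : R | ∃ x : Fin m → R, x ᵥ* A = r • b} =
      (Ideal.span (Set.range fun i => L i 0) : Set R) := by
  have hsyz : ∀ T : Fin (m + 1) → R, T ᵥ* stack = 0 ↔ ∃ U : Fin o → R, U ᵥ* L = T :=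
    fun T => ⟨hgen T, by rintro ⟨U, rfl⟩; rw [vecMul_vecMul, hLstack, vecMul_zero]⟩
  ext r
  simp only [Set.mem_ofPred_eq, SetLike.mem_coe, exists_vecMul_eq_smul_iff_exists_syzygy,
    ← hstack, Ideal.mem_span_range_iff_exists_fun]
  constructor
  · rintro ⟨T, hT, rfl⟩
    obtain ⟨U, rfl⟩ := (hsyz T).mp hT
    exact ⟨U, rfl⟩
  · rintro ⟨U, rfl⟩
    exact ⟨U ᵥ* L, (hsyz _).mpr ⟨U, rfl⟩, rfl⟩
end

section
/- Let R be a commutative ring, p a prime ideal of R, A ∈ R^{m×n}, b ∈ R^{1×n}. There exists a row vector y over the localization R_p with y·(A/1) = b/1 if and only if dom_R([b]_A) = { r | ∃ x, x·A = r·b } is not contained in p. -/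
/-! The map `x ↦ x ⬝ A` commutes with localization: on `R_p`-row vectors it is the localization
of the `R`-linear map `R^m → R^n`. Writing `y = x / s`, the equation `y (A/1) = b/1` means that
`x A / s = b / 1`, i.e. that `c (x A) = c s b` for some `c ∉ p`; then `c s` is an element of
`dom_R([b]_A)` outside `p`. Conversely `x A = r b` with `r ∉ p` gives the solution `y = x / r`. -/

open Matrix

namespace IsLocalizedModule

variable {R M N M' N' : Type*} [CommRing R] (S : Submonoid R)
  [AddCommGroup M] [Module R M] [AddCommGroup N] [Module R N]
  [AddCommGroup M'] [Module R M'] [AddCommGroup N'] [Module R N']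
  (f : M →ₗ[R] M') (g : N →ₗ[R] N') [IsLocalizedModule S f] [IsLocalizedModule S g]

theorem linearMap_mk'_of_comp_eq {φ : M →ₗ[R] N} {ψ : M' →ₗ[R] N'}
    (hψ : ψ ∘ₗ f = g ∘ₗ φ) (x : M) (s : S) : ψ (mk' f x s) = mk' g (φ x) s := by
  rw [eq_comm, mk'_eq_iff, ← LinearMap.comp_apply, ← hψ, LinearMap.comp_apply,
    ← mk'_cancel' f x s, Submonoid.smul_def, map_smul, ← Submonoid.smul_def]

theorem exists_apply_eq_iff_exists_apply_eq_smul {φ : M →ₗ[R] N} {ψ : M' →ₗ[R] N'}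
    (hψ : ψ ∘ₗ f = g ∘ₗ φ) (b : N) :
    (∃ y, ψ y = g b) ↔ ∃ s : S, ∃ x, φ x = (s : R) • b := by
  constructor
  · rintro ⟨y, hy⟩
    obtain ⟨⟨x, s⟩, rfl⟩ := mk'_surjective S f y
    rw [Function.uncurry_apply_pair, linearMap_mk'_of_comp_eq S f g hψ, mk'_eq_iff,
      Submonoid.smul_def, ← map_smul] at hy
    obtain ⟨c, hc⟩ := exists_of_eq (S := S) hy
    refine ⟨c * s, (c : R) • x, ?_⟩
    rw [map_smul, ← Submonoid.smul_def, hc, Submonoid.smul_def, Submonoid.coe_mul, mul_smul]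
  · rintro ⟨s, x, hx⟩
    refine ⟨mk' f x s, ?_⟩
    rw [linearMap_mk'_of_comp_eq S f g hψ, hx, ← Submonoid.smul_def, mk'_cancel]

end IsLocalizedModule

theorem exists_vecMul_map_algebraMap_eq_iff {R Rₛ ι κ : Type*} [CommRing R] [CommRing Rₛ]
    [Algebra R Rₛ] (S : Submonoid R) [IsLocalization S Rₛ] [Fintype ι] [Finite κ]
    (A : Matrix ι κ R) (b : κ → R) :
    (∃ y : ι → Rₛ, y ᵥ* A.map (algebraMap R Rₛ) = fun j ↦ algebraMap R Rₛ (b j)) ↔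
      ∃ s : S, ∃ x : ι → R, x ᵥ* A = (s : R) • b := by
  have := Finite.of_fintype ι
  refine IsLocalizedModule.exists_apply_eq_iff_exists_apply_eq_smul S
    (.pi fun i ↦ Algebra.linearMap R Rₛ ∘ₗ .proj i) (.pi fun i ↦ Algebra.linearMap R Rₛ ∘ₗ .proj i)
    (φ := A.vecMulLinear) (ψ := (A.map (algebraMap R Rₛ)).vecMulLinear.restrictScalars R) ?_ b
  ext x j
  exact (RingHom.map_vecMul _ A x j).symm

theorem stmt_11 {R : Type*} [CommRing R] (p : Ideal R) [p.IsPrime]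
    {m n : ℕ} (A : Matrix (Fin m) (Fin n) R) (b : Fin n → R) :
    (∃ y : Fin m → Localization.AtPrime p,
        y ᵥ* A.map (algebraMap R (Localization.AtPrime p)) =
          fun j => algebraMap R (Localization.AtPrime p) (b j)) ↔
      ¬ {r : R | ∃ x : Fin m → R, x ᵥ* A = r • b} ⊆ (p : Set R) := by
  rw [exists_vecMul_map_algebraMap_eq_iff p.primeCompl A b, Set.not_subset]
  exact ⟨fun ⟨s, hs⟩ ↦ ⟨s, hs, s.2⟩, fun ⟨r, hr, hrp⟩ ↦ ⟨⟨r, hrp⟩, hr⟩⟩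
end

section
/- Let R be a commutative ring, S ⊆ R a submonoid, and A ∈ R^{m×n}, b ∈ R^{1×n}. Then dom_{S⁻¹R}([b/1]_{A/1}) = { ρ ∈ S⁻¹R | ∃ y, y·(A/1) = ρ·(b/1) } equals the ideal of S⁻¹R generated by the image of dom_R([b]_A) = { r ∈ R | ∃ x, x·A = r·b } under the localization map. -/
/-!
An element `ρ = r / t` of `S⁻¹R` lies in `dom_{S⁻¹R}` iff `r / 1` does. If `y ·(A/1) = (r/1)·(b/1)`,
clearing the finitely many denominators of `y` turns this into an equality of images of vectors
of `Rⁿ`, which then holds in `Rⁿ` itself after multiplying by a single element of `S`. So some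
`s r` with `s ∈ S` lies in `dom_R`, and `ρ = (s r) / (s t)` lies in the extended ideal. The other
inclusion is just applying the localization map to a relation `x A = r b`.
-/

namespace Matrix

variable {R : Type*} [CommSemiring R] {m n : Type*} [Fintype m]

/-- The paper's `dom_R([b]_A)`: the scalars `r` such that `r • b` lies in the row space of `A`. -/
def dom (A : Matrix m n R) (b : n → R) : Ideal R :=
  (LinearMap.range A.vecMulLinear).colon {b}

theorem mem_dom {A : Matrix m n R} {b : n → R} {r : R} :
    r ∈ A.dom b ↔ ∃ x, x ᵥ* A = r • b := by
  simp [dom]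

theorem map_dom_le {T : Type*} [CommSemiring T] (f : R →+* T) (A : Matrix m n R) (b : n → R) :
    (A.dom b).map f ≤ (A.map f).dom (f ∘ b) := by
  refine Ideal.map_le_iff_le_comap.2 fun r hr => ?_
  obtain ⟨x, hx⟩ := mem_dom.1 hr
  refine mem_dom.2 ⟨f ∘ x, funext fun j => ?_⟩
  rw [← RingHom.map_vecMul, hx]
  simp

variable {Rₛ : Type*} [CommSemiring Rₛ] [Algebra R Rₛ]

theorem exists_mul_mem_dom_of_algebraMap_mem_dom (S : Submonoid R) [IsLocalization S Rₛ]
    [Finite n] {A : Matrix m n R} {b : n → R} {r : R}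
    (h : algebraMap R Rₛ r ∈ (A.map (algebraMap R Rₛ)).dom (algebraMap R Rₛ ∘ b)) :
    ∃ s ∈ S, s * r ∈ A.dom b := by
  obtain ⟨y, hy⟩ := mem_dom.1 h
  obtain ⟨s, hs⟩ := IsLocalization.exist_integer_multiples_of_finite S y
  choose x hx using hs
  have hφ : algebraMap R Rₛ ∘ (x ᵥ* A) = algebraMap R Rₛ ∘ (((s : R) * r) • b) := by
    ext j
    have hx' : algebraMap R Rₛ ∘ x = (s : R) • y := funext hx
    rw [Function.comp_apply, RingHom.map_vecMul, hx', smul_vecMul, hy]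
    simp [Algebra.smul_def, mul_assoc]
  -- `n → Rₛ` is the localization of `n → R` at `S`, as `n` is finite.
  obtain ⟨c, hc⟩ := IsLocalizedModule.exists_of_eq (S := S)
    (f := LinearMap.pi fun i : n => Algebra.linearMap R Rₛ ∘ₗ LinearMap.proj i)
    (x₁ := x ᵥ* A) (x₂ := ((s : R) * r) • b) hφ
  refine ⟨c * s, mul_mem c.2 s.2, mem_dom.2 ⟨(c : R) • x, ?_⟩⟩
  rw [smul_vecMul, ← Submonoid.smul_def, hc, Submonoid.smul_def, smul_smul, mul_assoc]

theorem dom_map_algebraMap (S : Submonoid R) [IsLocalization S Rₛ] [Finite n]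
    (A : Matrix m n R) (b : n → R) :
    (A.map (algebraMap R Rₛ)).dom (algebraMap R Rₛ ∘ b) = (A.dom b).map (algebraMap R Rₛ) := by
  refine le_antisymm (fun ρ hρ => ?_) (map_dom_le _ A b)
  obtain ⟨r, t, rfl⟩ := IsLocalization.exists_mk'_eq S ρ
  rw [IsLocalization.mk'_mem_map_algebraMap_iff]
  refine exists_mul_mem_dom_of_algebraMap_mem_dom (Rₛ := Rₛ) S ?_
  rw [← IsLocalization.mk'_spec' Rₛ r t]
  exact Ideal.mul_mem_left _ _ hρ

end Matrix

open Matrix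

theorem stmt_18 {R : Type*} [CommRing R] (S : Submonoid R)
    {m n : ℕ} (A : Matrix (Fin m) (Fin n) R) (b : Fin n → R)
    (I : Ideal R) (hI : (I : Set R) = {r : R | ∃ x : Fin m → R, x ᵥ* A = r • b}) :
    {ρ : Localization S | ∃ y : Fin m → Localization S,
        y ᵥ* A.map (algebraMap R (Localization S)) =
          ρ • fun j => algebraMap R (Localization S) (b j)} =
      (I.map (algebraMap R (Localization S)) : Set (Localization S)) := by
  obtain rfl : I = A.dom b := SetLike.coe_injective <| hI.trans <| by ext; simp [mem_dom]
  rw [← dom_map_algebraMap S]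
  ext
  simp only [Set.mem_ofPred_eq, SetLike.mem_coe, mem_dom, Function.comp_def]
end

section
/- Let R be a commutative ring, p a prime ideal, A ∈ R^{m×n}, b ∈ R^{1×n}, and let (rᵢ | Lᵢ), i = 1,…,o, be elements with rᵢ ∈ R, Lᵢ ∈ R^{1×m}, satisfying rᵢ·b + Lᵢ·A = 0, such that r₁, …, r_o generate the ideal dom_R([b]_A). Then either all rᵢ ∈ p, in which case no row vector y over R_p satisfies y·(A/1) = b/1, or some rᵢ ∉ p, in which case y := −(1/rᵢ)·(Lᵢ/1) satisfies y·(A/1) = b/1 over R_p. -/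
/-!
A solution `y` of `y A = b` over `R_p` has a common denominator `c ∉ p`; clearing it, and then
the finitely many denominators witnessing the equalities over `R_p`, gives `x` over `R` and
`s ∉ p` with `x A = s b`. So `s ∈ dom_R([b]_A) = (r₁, …, r_o)`, which is impossible if every
`rᵢ ∈ p`. Conversely, if `rᵢ ∉ p` then `rᵢ b = -Lᵢ A` can be divided by `rᵢ` in `R_p`.
-/

open Matrix

section

variable {R : Type*} [CommRing R] {m n : Type*} [Fintype m]

theorem RingHom.comp_vecMul_map {S : Type*} [CommRing S] (φ : R →+* S) (A : Matrix m n R)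
    (v : m → R) : (φ ∘ v) ᵥ* A.map φ = φ ∘ (v ᵥ* A) :=
  funext fun j => (φ.map_vecMul A v j).symm

theorem IsLocalization.isLocalizedModule_compLeft (M : Submonoid R) (S : Type*) [CommRing S]
    [Algebra R S] [IsLocalization M S] (ι : Type*) [Finite ι] :
    IsLocalizedModule M ((Algebra.linearMap R S).compLeft ι) :=
  IsLocalizedModule.pi M fun _ : ι => Algebra.linearMap R S

theorem IsLocalization.exists_mem_vecMul_eq_smul_of_vecMul_map_eq (M : Submonoid R)
    {S : Type*} [CommRing S] [Algebra R S] [IsLocalization M S] [Finite n]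
    (A : Matrix m n R) (b : n → R) {y : m → S}
    (hy : y ᵥ* A.map (algebraMap R S) = algebraMap R S ∘ b) :
    ∃ s ∈ M, ∃ x : m → R, x ᵥ* A = s • b := by
  have := isLocalizedModule_compLeft M S m
  have := isLocalizedModule_compLeft M S n
  obtain ⟨⟨x, c⟩, hc⟩ := IsLocalizedModule.surj M ((Algebra.linearMap R S).compLeft m) y
  have hx : algebraMap R S ∘ x = c • y := hc.symm
  have heq : (Algebra.linearMap R S).compLeft n (x ᵥ* A) =
      (Algebra.linearMap R S).compLeft n (c • b) := by
    change algebraMap R S ∘ (x ᵥ* A) = algebraMap R S ∘ (c • b)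
    rw [← RingHom.comp_vecMul_map, hx, smul_vecMul, hy]
    funext j
    simp [Submonoid.smul_def, Algebra.smul_def]
  obtain ⟨d, hd⟩ := IsLocalizedModule.exists_of_eq (S := M) heq
  exact ⟨d * c, mul_mem d.2 c.2, d • x, by rw [smul_vecMul, hd, mul_smul]; rfl⟩

theorem Localization.mk_neg_vecMul_map_eq {M : Submonoid R} (A : Matrix m n R) (b : n → R)
    {r : R} (hr : r ∈ M) (L : m → R) (h : r • b + L ᵥ* A = 0) :
    (fun k => Localization.mk (-L k) ⟨r, hr⟩) ᵥ* A.map (algebraMap R (Localization M)) =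
      algebraMap R (Localization M) ∘ b := by
  set φ := algebraMap R (Localization M)
  have hunit : IsUnit (φ r) := IsLocalization.map_units _ ⟨r, hr⟩
  have hclear : φ r • (fun k => Localization.mk (-L k) ⟨r, hr⟩) = φ ∘ (-L) := by
    funext k
    simp [φ, Localization.mk_eq_mk', mul_comm]
  rw [← hunit.smul_left_cancel, ← smul_vecMul, hclear, φ.comp_vecMul_map, neg_vecMul,
    ← eq_neg_of_add_eq_zero_left h]
  funext j
  simp

end

theorem stmt_19 {R : Type*} [CommRing R] (p : Ideal R) [p.IsPrime]
    {m n o : ℕ} (A : Matrix (Fin m) (Fin n) R) (b : Fin n → R)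
    (r : Fin o → R) (L : Fin o → Fin m → R)
    (hsyz : ∀ i, r i • b + L i ᵥ* A = 0)
    (hgen : (Ideal.span (Set.range r) : Set R) =
      {s : R | ∃ x : Fin m → R, x ᵥ* A = s • b}) :
    ((∀ i, r i ∈ p) →
        ¬ ∃ y : Fin m → Localization.AtPrime p,
          y ᵥ* A.map (algebraMap R (Localization.AtPrime p)) =
            fun j => algebraMap R (Localization.AtPrime p) (b j)) ∧
      ∀ i, (hri : r i ∉ p) →
        (fun j => Localization.mk (-(L i j)) ⟨r i, hri⟩) ᵥ*
            A.map (algebraMap R (Localization.AtPrime p)) =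
          fun j => algebraMap R (Localization.AtPrime p) (b j) := by
  refine ⟨fun hall ⟨y, hy⟩ => ?_,
    fun i hri => Localization.mk_neg_vecMul_map_eq A b hri (L i) (hsyz i)⟩
  obtain ⟨s, hs, x, hx⟩ :=
    IsLocalization.exists_mem_vecMul_eq_smul_of_vecMul_map_eq p.primeCompl A b hy
  have hdom : s ∈ Ideal.span (Set.range r) := by
    rw [← SetLike.mem_coe, hgen]
    exact ⟨x, hx⟩
  exact hs (Ideal.span_le.2 (Set.range_subset_iff.2 hall) hdom)
end
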